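/- If the typed unification algorithm applied to terms t1 and t2 outputs wrong, then there is no substitution θ such that θ(t1) and θ(t2) have the same type; in particular, t1 and t2 are not unifiable. -/
import Mathlib


/-- Base types for constants. -/
inductive Ty : Type
  | int | float | atom | str
  deriving DecidableEq

/-- First-order terms: variables, typed constants, and compound terms. -/
inductive Term : Type
  | var : ℕ → Term
  | const : ℕ → Ty → Term
  | app : ℕ → List Term → Term

mutual
  /-- Application of a substitution to a term. -/
  def subst (θ : ℕ → Term) : Term → Term
    | .var x => θ x
    | .const c τ => .const c τ
    | .app f ts => .app f (substList θ ts)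
  /-- Application of a substitution to a list of terms. -/
  def substList (θ : ℕ → Term) : List Term → List Term
    | [] => []
    | t :: ts => subst θ t :: substList θ ts
end

mutual
  /-- Occurrence of a variable in a term. -/
  def occurs (x : ℕ) : Term → Bool
    | .var y => x == y
    | .const _ _ => false
    | .app _ ts => occursList x ts
  /-- Occurrence of a variable in a list of terms. -/
  def occursList (x : ℕ) : List Term → Bool
    | [] => false
    | t :: ts => occurs x t || occursList x ts
end

/-- Composition of substitutions: (θ ∘ η)(X) = θ(η(X)). -/
def comp (θ η : ℕ → Term) : ℕ → Term := fun x => subst θ (η x)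

/-- The substitution binding the single variable x to t. -/
def single (x : ℕ) (t : Term) : ℕ → Term := fun y => if y = x then t else .var y

/-- θ is a unifier of t₁ and t₂. -/
def IsUnifier (θ : ℕ → Term) (t₁ t₂ : Term) : Prop := subst θ t₁ = subst θ t₂

/-- θ is a most general unifier of t₁ and t₂. -/
def IsMGU (θ : ℕ → Term) (t₁ t₂ : Term) : Prop :=
  IsUnifier θ t₁ t₂ ∧ ∀ η, IsUnifier η t₁ t₂ → ∃ δ, ∀ x, η x = subst δ (θ x)

/-- θ is idempotent. -/
def Idempotent (θ : ℕ → Term) : Prop := ∀ t, subst θ (subst θ t) = subst θ t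

/-- Configurations of the typed unification algorithm: a multiset of equations
together with the Boolean flag, or the halting value wrong. -/
inductive Config : Type
  | state : Multiset (Term × Term) → Bool → Config
  | wrong : Config

/-- Application of a single binding to an equation. -/
def substEq (x : ℕ) (t : Term) (e : Term × Term) : Term × Term :=
  (subst (single x t) e.1, subst (single x t) e.2)

/-- The rewrite rules of the typed unification algorithm. -/
inductive Step : Config → Config → Prop
  | decompose (f : ℕ) (ts ss : List Term) (R : Multiset (Term × Term)) (F : Bool)
      (h : ts.length = ss.length) :
      Step (.state ((Term.app f ts, Term.app f ss) ::ₘ R) F)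
           (.state (↑(ts.zip ss) + R) F)
  | clash (f g : ℕ) (ts ss : List Term) (R : Multiset (Term × Term)) (F : Bool)
      (h : f ≠ g ∨ ts.length ≠ ss.length) :
      Step (.state ((Term.app f ts, Term.app g ss) ::ₘ R) F) .wrong
  | constDel (c : ℕ) (τ : Ty) (R : Multiset (Term × Term)) (F : Bool) :
      Step (.state ((Term.const c τ, Term.const c τ) ::ₘ R) F) (.state R F)
  | constFalse (c d : ℕ) (τ : Ty) (R : Multiset (Term × Term)) (F : Bool) (h : c ≠ d) :
      Step (.state ((Term.const c τ, Term.const d τ) ::ₘ R) F) (.state R false)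
  | constWrong (c d : ℕ) (τ σ : Ty) (R : Multiset (Term × Term)) (F : Bool) (h : τ ≠ σ) :
      Step (.state ((Term.const c τ, Term.const d σ) ::ₘ R) F) .wrong
  | constApp (c : ℕ) (τ : Ty) (f : ℕ) (ts : List Term) (R : Multiset (Term × Term)) (F : Bool) :
      Step (.state ((Term.const c τ, Term.app f ts) ::ₘ R) F) .wrong
  | appConst (c : ℕ) (τ : Ty) (f : ℕ) (ts : List Term) (R : Multiset (Term × Term)) (F : Bool) :
      Step (.state ((Term.app f ts, Term.const c τ) ::ₘ R) F) .wrong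
  | varDel (x : ℕ) (R : Multiset (Term × Term)) (F : Bool) :
      Step (.state ((Term.var x, Term.var x) ::ₘ R) F) (.state R F)
  | orient (x : ℕ) (t : Term) (R : Multiset (Term × Term)) (F : Bool)
      (h : ∀ y, t ≠ Term.var y) :
      Step (.state ((t, Term.var x) ::ₘ R) F) (.state ((Term.var x, t) ::ₘ R) F)
  | eliminate (x : ℕ) (t : Term) (R : Multiset (Term × Term)) (F : Bool)
      (h₁ : occurs x t = false)
      (h₂ : ∃ e ∈ R, occurs x e.1 = true ∨ occurs x e.2 = true) :
      Step (.state ((Term.var x, t) ::ₘ R) F)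
           (.state ((Term.var x, t) ::ₘ R.map (substEq x t)) F)
  | occursFail (x : ℕ) (t : Term) (R : Multiset (Term × Term)) (F : Bool)
      (h₁ : occurs x t = true) (h₂ : t ≠ Term.var x) :
      Step (.state ((Term.var x, t) ::ₘ R) F) (.state R false)

/-- Reachability by rewrite steps. -/
def Reaches : Config → Config → Prop := Relation.ReflTransGen Step

/-- A configuration to which no rule applies. -/
def NormalCfg (c : Config) : Prop := ∀ c', ¬ Step c c'

/-- The typed unification algorithm on input S outputs wrong. -/
def OutputsWrong (S : Multiset (Term × Term)) : Prop :=
  Reaches (Config.state S true) Config.wrong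

/-- The typed unification algorithm on input S outputs false. -/
def OutputsFalse (S : Multiset (Term × Term)) : Prop :=
  ∃ S', Reaches (Config.state S true) (Config.state S' false) ∧ NormalCfg (Config.state S' false)

/-- The typed unification algorithm on input S₀ succeeds with solved set S. -/
def OutputsSet (S₀ S : Multiset (Term × Term)) : Prop :=
  Reaches (Config.state S₀ true) (Config.state S true) ∧ NormalCfg (Config.state S true)

/-- Types: base types and compound types f(σ₁,…,σₙ). -/
inductive Typ : Type
  | base : Ty → Typ
  | comp : ℕ → List Typ → Typ

/-- Typing of ground terms: each constant has its base type, and a compound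
term f(t₁,…,tₙ) has type f(σ₁,…,σₙ) when each tᵢ has type σᵢ. -/
inductive HasType : Term → Typ → Prop
  | const (c : ℕ) (τ : Ty) : HasType (Term.const c τ) (Typ.base τ)
  | app (f : ℕ) (ts : List Term) (σs : List Typ)
      (hlen : ts.length = σs.length)
      (h : ∀ i (h₁ : i < ts.length) (h₂ : i < σs.length),
        HasType (ts.get ⟨i, h₁⟩) (σs.get ⟨i, h₂⟩)) :
      HasType (Term.app f ts) (Typ.comp f σs)


mutual
  def typeOf : Term → Option Typ
    | .var _ => none
    | .const _ τ => some (.base τ)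
    | .app f ts => (typeOfList ts).map (.comp f)
  def typeOfList : List Term → Option (List Typ)
    | [] => some []
    | t :: ts => do
        let τ ← typeOf t
        let τs ← typeOfList ts
        pure (τ :: τs)
end

theorem substList_eq_map (θ : ℕ → Term) (L : List Term) :
    substList θ L = L.map (subst θ) := by
  induction L with
  | nil => rfl
  | cons t ts ih => simp [substList, ih]

mutual
  theorem subst_subst (θ η : ℕ → Term) : ∀ s, subst θ (subst η s) = subst (comp θ η) s
    | .var x => rfl
    | .const c τ => rfl
    | .app f ts => by simp [subst, substList_subst θ η ts]
  theorem substList_subst (θ η : ℕ → Term) :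
      ∀ L, substList θ (substList η L) = substList (comp θ η) L
    | [] => rfl
    | t :: ts => by simp [substList, subst_subst θ η t, substList_subst θ η ts]
end

mutual
  theorem typeOf_congr {θ θ' : ℕ → Term} (h : ∀ y, typeOf (θ y) = typeOf (θ' y)) :
      ∀ s, typeOf (subst θ s) = typeOf (subst θ' s)
    | .var x => h x
    | .const c τ => rfl
    | .app f ts => by simp [subst, typeOf, typeOfList_congr h ts]
  theorem typeOfList_congr {θ θ' : ℕ → Term} (h : ∀ y, typeOf (θ y) = typeOf (θ' y)) :
      ∀ L, typeOfList (substList θ L) = typeOfList (substList θ' L)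
    | [] => rfl
    | t :: ts => by simp [substList, typeOfList, typeOf_congr h t, typeOfList_congr h ts]
end

mutual
  theorem typeOf_isSome {θ : ℕ → Term} (h : ∀ y, (typeOf (θ y)).isSome) :
      ∀ s, (typeOf (subst θ s)).isSome
    | .var x => h x
    | .const c τ => by simp [subst, typeOf]
    | .app f ts => by
        obtain ⟨τs, hτs⟩ := Option.isSome_iff_exists.mp (typeOfList_isSome h ts)
        simp [subst, typeOf, hτs]
  theorem typeOfList_isSome {θ : ℕ → Term} (h : ∀ y, (typeOf (θ y)).isSome) :
      ∀ L, (typeOfList (substList θ L)).isSome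
    | [] => by simp [substList, typeOfList]
    | t :: ts => by
        obtain ⟨τ, hτ⟩ := Option.isSome_iff_exists.mp (typeOf_isSome h t)
        obtain ⟨τs, hτs⟩ := Option.isSome_iff_exists.mp (typeOfList_isSome h ts)
        simp [substList, typeOfList, hτ, hτs]
end

theorem typeOfList_cons {t : Term} {ts : List Term} {σs : List Typ}
    (h : typeOfList (t :: ts) = some σs) :
    ∃ τ τs, typeOf t = some τ ∧ typeOfList ts = some τs ∧ σs = τ :: τs := by
  cases ht : typeOf t with
  | none => simp [typeOfList, ht] at h
  | some τ =>
    cases hts : typeOfList ts with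
    | none => simp [typeOfList, ht, hts] at h
    | some τs =>
      refine ⟨τ, τs, rfl, rfl, ?_⟩
      simp [typeOfList, ht, hts] at h
      exact h.symm

theorem typeOfList_length {L : List Term} {σs : List Typ}
    (h : typeOfList L = some σs) : L.length = σs.length := by
  induction L generalizing σs with
  | nil => simp [typeOfList] at h; simp [h]
  | cons t ts ih =>
    obtain ⟨τ, τs, _, hts, rfl⟩ := typeOfList_cons h
    simp [ih hts]

theorem typeOfList_get {L : List Term} {σs : List Typ}
    (h : typeOfList L = some σs) :
    ∀ i (h₁ : i < L.length) (h₂ : i < σs.length),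
      typeOf (L.get ⟨i, h₁⟩) = some (σs.get ⟨i, h₂⟩) := by
  induction L generalizing σs with
  | nil => intro i h₁ _; exact absurd h₁ (by simp)
  | cons t ts ih =>
    obtain ⟨τ, τs, ht, hts, rfl⟩ := typeOfList_cons h
    intro i h₁ h₂
    cases i with
    | zero => simpa using ht
    | succ j => simpa using ih hts j (by simpa using h₁) (by simpa using h₂)

theorem typeOfList_of_get {L : List Term} {σs : List Typ}
    (hlen : L.length = σs.length)
    (h : ∀ i (h₁ : i < L.length) (h₂ : i < σs.length),
      typeOf (L.get ⟨i, h₁⟩) = some (σs.get ⟨i, h₂⟩)) :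
    typeOfList L = some σs := by
  induction L generalizing σs with
  | nil =>
    cases σs with
    | nil => rfl
    | cons => simp at hlen
  | cons t ts ih =>
    cases σs with
    | nil => simp at hlen
    | cons τ τs =>
      have ht : typeOf t = some τ := by simpa using h 0 (by simp) (by simp)
      have hts : typeOfList ts = some τs := by
        refine ih (by simpa using hlen) ?_
        intro i h₁ h₂
        simpa using h (i+1) (by simpa using h₁) (by simpa using h₂)
      simp [typeOfList, ht, hts]

theorem hasType_typeOf {t : Term} {τ : Typ} (h : HasType t τ) : typeOf t = some τ := by
  induction h with
  | const c τ => rfl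
  | app f ts σs hlen h ih =>
    have : typeOfList ts = some σs := typeOfList_of_get hlen ih
    simp [typeOf, this]

/-- The invariant: every equation in the current set is simultaneously typable
under θ with a common type. -/
def EqInv (θ : ℕ → Term) (S : Multiset (Term × Term)) : Prop :=
  ∀ e ∈ S, typeOf (subst θ e.1) = typeOf (subst θ e.2) ∧ (typeOf (subst θ e.1)).isSome

theorem step_inv {S : Multiset (Term × Term)} {F : Bool} {c : Config} {θ : ℕ → Term}
    (hs : Step (.state S F) c) (hI : EqInv θ S) :
    ∃ S' F', c = .state S' F' ∧ EqInv θ S' := by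
  cases hs with
  | decompose f ts ss R F hlen =>
    refine ⟨_, _, rfl, ?_⟩
    intro e he
    rw [Multiset.mem_add] at he
    cases he with
    | inr hR => exact hI e (Multiset.mem_cons_of_mem hR)
    | inl hz =>
      have hz' : e ∈ ts.zip ss := by simpa using hz
      obtain ⟨⟨i, hi⟩, hget⟩ := List.get_of_mem hz'
      have hlen' : (ts.zip ss).length = ts.length := by
        simp [List.length_zip, hlen]
      have hi1 : i < ts.length := by omega
      have hi2 : i < ss.length := by omega
      have hget' : e = (ts.get ⟨i, hi1⟩, ss.get ⟨i, hi2⟩) := by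
        rw [← hget]; simp [List.get_eq_getElem]
      obtain ⟨heq, hsome⟩ := hI (Term.app f ts, Term.app f ss) (Multiset.mem_cons_self _ _)
      simp only [subst, typeOf] at heq hsome
      obtain ⟨τ0, hτ0⟩ := Option.isSome_iff_exists.mp hsome
      obtain ⟨σs, hσs, hτ0e⟩ := Option.map_eq_some_iff.mp hτ0
      have hσs' : typeOfList (substList θ ss) = some σs := by
        have h1 : (typeOfList (substList θ ss)).map (Typ.comp f) = some τ0 := by
          rw [← heq]; exact hτ0
        subst hτ0e
        obtain ⟨σs', hσs', heq'⟩ := Option.map_eq_some_iff.mp h1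
        injection heq' with _ h2
        subst h2
        exact hσs'
      have hlts : i < (substList θ ts).length := by
        rw [substList_eq_map]; simpa using hi1
      have hlss : i < (substList θ ss).length := by
        rw [substList_eq_map]; simpa using hi2
      have hls : i < σs.length := by
        have := typeOfList_length hσs
        omega
      have h1 := typeOfList_get hσs i hlts hls
      have h2 := typeOfList_get hσs' i hlss hls
      have e1 : (substList θ ts).get ⟨i, hlts⟩ = subst θ (ts.get ⟨i, hi1⟩) := by
        simp [substList_eq_map, List.get_eq_getElem]
      have e2 : (substList θ ss).get ⟨i, hlss⟩ = subst θ (ss.get ⟨i, hi2⟩) := by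
        simp [substList_eq_map, List.get_eq_getElem]
      rw [e1] at h1
      rw [e2] at h2
      rw [hget']
      exact ⟨by rw [h1, h2], by rw [h1]; rfl⟩
  | clash f g ts ss R F h =>
    exfalso
    obtain ⟨heq, hsome⟩ := hI (Term.app f ts, Term.app g ss) (Multiset.mem_cons_self _ _)
    simp only [subst, typeOf] at heq hsome
    obtain ⟨τ0, hτ0⟩ := Option.isSome_iff_exists.mp hsome
    obtain ⟨σs, hσs, hτ0e⟩ := Option.map_eq_some_iff.mp hτ0
    have h1 : (typeOfList (substList θ ss)).map (Typ.comp g) = some τ0 := by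
      rw [← heq]; exact hτ0
    subst hτ0e
    obtain ⟨σs', hσs', heq'⟩ := Option.map_eq_some_iff.mp h1
    injection heq' with hfg hσ
    subst hσ
    have l1 := typeOfList_length hσs
    have l2 := typeOfList_length hσs'
    rw [substList_eq_map, List.length_map] at l1 l2
    cases h with
    | inl hf => exact hf hfg.symm
    | inr hl => exact hl (by omega)
  | constDel c τ R F =>
    exact ⟨_, _, rfl, fun e he => hI e (Multiset.mem_cons_of_mem he)⟩
  | constFalse c d τ R F hcd =>
    exact ⟨_, _, rfl, fun e he => hI e (Multiset.mem_cons_of_mem he)⟩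
  | constWrong c d τ σ R F hτσ =>
    exfalso
    obtain ⟨heq, _⟩ := hI (Term.const c τ, Term.const d σ) (Multiset.mem_cons_self _ _)
    simp only [subst, typeOf, Option.some_inj] at heq
    cases heq
    exact hτσ rfl
  | constApp c τ f ts R F =>
    exfalso
    obtain ⟨heq, hsome⟩ := hI (Term.const c τ, Term.app f ts) (Multiset.mem_cons_self _ _)
    simp only [subst, typeOf] at heq
    obtain ⟨σs, hσs, h2⟩ := Option.map_eq_some_iff.mp heq.symm
    exact absurd h2 (by simp)
  | appConst c τ f ts R F =>
    exfalso
    obtain ⟨heq, hsome⟩ := hI (Term.app f ts, Term.const c τ) (Multiset.mem_cons_self _ _)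
    simp only [subst, typeOf] at heq
    obtain ⟨σs, hσs, h2⟩ := Option.map_eq_some_iff.mp heq
    exact absurd h2 (by simp)
  | varDel x R F =>
    exact ⟨_, _, rfl, fun e he => hI e (Multiset.mem_cons_of_mem he)⟩
  | orient x t R F hne =>
    refine ⟨_, _, rfl, ?_⟩
    intro e he
    rw [Multiset.mem_cons] at he
    cases he with
    | inl h' =>
      subst h'
      obtain ⟨heq, hsome⟩ := hI (t, Term.var x) (Multiset.mem_cons_self _ _)
      exact ⟨heq.symm, heq ▸ hsome⟩
    | inr hR => exact hI e (Multiset.mem_cons_of_mem hR)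
  | eliminate x t R F h₁ h₂ =>
    refine ⟨_, _, rfl, ?_⟩
    obtain ⟨heqx, hsomex⟩ := hI (Term.var x, t) (Multiset.mem_cons_self _ _)
    have hcongr : ∀ y, typeOf ((comp θ (single x t)) y) = typeOf (θ y) := by
      intro y
      by_cases hy : y = x
      · subst hy
        simp only [comp, single, if_pos rfl]
        exact heqx.symm
      · simp [comp, single, hy, subst]
    intro e he
    rw [Multiset.mem_cons] at he
    cases he with
    | inl h' => subst h'; exact ⟨heqx, hsomex⟩
    | inr hR =>
      obtain ⟨e', he', rfl⟩ := Multiset.mem_map.mp hR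
      obtain ⟨heq, hsome⟩ := hI e' (Multiset.mem_cons_of_mem he')
      have k1 : typeOf (subst θ (substEq x t e').1) = typeOf (subst θ e'.1) := by
        show typeOf (subst θ (subst (single x t) e'.1)) = _
        rw [subst_subst]
        exact typeOf_congr hcongr e'.1
      have k2 : typeOf (subst θ (substEq x t e').2) = typeOf (subst θ e'.2) := by
        show typeOf (subst θ (subst (single x t) e'.2)) = _
        rw [subst_subst]
        exact typeOf_congr hcongr e'.2
      exact ⟨by rw [k1, k2, heq], by rw [k1]; exact hsome⟩
  | occursFail x t R F h₁ h₂ =>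
    exact ⟨_, _, rfl, fun e he => hI e (Multiset.mem_cons_of_mem he)⟩

theorem reaches_inv {θ : ℕ → Term} {c : Config} (h : Reaches c .wrong) :
    ∀ {S : Multiset (Term × Term)} {F : Bool}, c = .state S F → EqInv θ S → False := by
  induction h using Relation.ReflTransGen.head_induction_on with
  | refl => intro S F hc _; exact Config.noConfusion hc
  | head hstep _ ih =>
    intro S F hc hI
    subst hc
    obtain ⟨S', F', rfl, hI'⟩ := step_inv hstep hI
    exact ih rfl hI'

/-- if typed unification of t₁ and t₂ outputs wrong, then no
substitution θ makes θ(t₁) and θ(t₂) have the same type; in particular,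
t₁ and t₂ are not unifiable. -/
theorem ill_typed_unification (t₁ t₂ : Term) (h : OutputsWrong {(t₁, t₂)}) :
    (¬ ∃ (θ : ℕ → Term) (τ : Typ), HasType (subst θ t₁) τ ∧ HasType (subst θ t₂) τ) ∧
    ¬ ∃ θ : ℕ → Term, IsUnifier θ t₁ t₂ := by
  constructor
  · rintro ⟨θ, τ, h1, h2⟩
    refine reaches_inv h (θ := θ) rfl ?_
    intro e he
    rw [Multiset.mem_singleton] at he
    subst he
    exact ⟨by rw [hasType_typeOf h1, hasType_typeOf h2], by rw [hasType_typeOf h1]; rfl⟩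
  · rintro ⟨θ, hu⟩
    set η : ℕ → Term := comp (fun _ : ℕ => Term.const 0 Ty.int) θ with hη
    have hground : ∀ y, (typeOf ((fun _ : ℕ => Term.const 0 Ty.int) y)).isSome := by
      intro y; rfl
    have hη' : ∀ y, (typeOf (η y)).isSome := fun y => typeOf_isSome hground (θ y)
    refine reaches_inv h (θ := η) rfl ?_
    intro e he
    rw [Multiset.mem_singleton] at he
    subst he
    have he1 : subst η t₁ = subst η t₂ := by
      simp only [hη, ← subst_subst]
      rw [hu]
    exact ⟨by rw [he1], typeOf_isSome hη' t₁⟩
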